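/- arXiv:1310.7628 — 4 statements merged into one kernel-verified Lean document; each statement's English description precedes it below -/
import Mathlib

section
/- Fix λ > 0 and ρ > 0. For α > 0, set √ω_α := λρ/4 + α/2, x̄_α := (2/(λρ + 2α))·log(λρ/(λρ + 4α)), and φ_α(x) := √(2ω_α/λ)·sech(√ω_α(|x| − x̄_α)). Then, as α → 0+, ∫_ℝ |φ_α(x) − g(x)|² dx + ∫_{ℝ∖{0}} |φ_α'(x) − g'(x)|² dx → 0, where g(x) := (√λ·ρ/(2√2))·sech((λρ/4)·x); that is, φ_α converges in H¹(ℝ) to the free soliton of mass ρ. -/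
/-!
`φ_α(x) = c sech(k (|x| - b))` with amplitude `c`, wave number `k ≥ λρ/4` and centre `b ≤ 0`,
all depending continuously on `α ≥ 0` and reducing to the free soliton `g` at `α = 0`.
Because `k (|x| - b) ≥ (λρ/4) |x|` and `sech y ≤ 2 e^{-y}`, both `φ_α` and `φ_α'` are bounded
by `C e^{-λρ|x|/4}` uniformly for small `α`, so dominated convergence gives the `H¹` limit.
-/

open MeasureTheory Real Filter Set Topology

noncomputable section

/-- sech x = 1 / cosh x -/
def sech (x : ℝ) : ℝ := 1 / Real.cosh x

lemma sech_pos (y : ℝ) : 0 < sech y := one_div_pos.2 (cosh_pos y)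

@[fun_prop]
lemma continuous_sech : Continuous sech :=
  continuous_const.div continuous_cosh fun y => (cosh_pos y).ne'

lemma sech_le_two_mul_exp_neg (y : ℝ) : sech y ≤ 2 * exp (-y) := by
  have h : exp (-y) * exp y = 1 := by rw [← exp_add, neg_add_cancel, exp_zero]
  rw [sech, div_le_iff₀ (cosh_pos y), cosh_eq]
  nlinarith [exp_pos (-y)]

lemma hasDerivAt_sech (y : ℝ) : HasDerivAt sech (-(tanh y * sech y)) y := by
  have h : sech = fun y => (cosh y)⁻¹ := funext fun y => one_div _
  rw [h]
  refine ((hasDerivAt_cosh y).inv (cosh_pos y).ne').congr_deriv ?_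
  rw [tanh_eq_sinh_div_cosh]
  ring

lemma abs_tanh_mul_sech_le (y : ℝ) : |tanh y * sech y| ≤ sech y := by
  rw [abs_mul, abs_of_pos (sech_pos y)]
  exact mul_le_of_le_one_left (sech_pos y).le (abs_tanh_lt_one y).le

@[fun_prop]
lemma continuous_tanh : Continuous tanh := by
  simp_rw [funext tanh_eq_sinh_div_cosh]
  exact continuous_sinh.div continuous_cosh fun y => (cosh_pos y).ne'

lemma integrable_exp_neg_mul_abs {b : ℝ} (hb : 0 < b) :
    Integrable fun x : ℝ => exp (-b * |x|) := by
  refine Integrable.of_integral_ne_zero ?_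
  rw [integral_comp_abs (f := fun x => exp (-b * x)), integral_exp_mul_Ioi (neg_lt_zero.2 hb)]
  simp [hb.ne']

theorem tendsto_integral_sq_sub_of_dominated {α ι : Type*} [MeasurableSpace α] {μ : Measure α}
    {l : Filter ι} [l.IsCountablyGenerated] {F : ι → α → ℝ} {f bound : α → ℝ}
    (hF_meas : ∀ᶠ i in l, AEStronglyMeasurable (F i) μ) (hf_meas : AEStronglyMeasurable f μ)
    (hF_bound : ∀ᶠ i in l, ∀ᵐ x ∂μ, |F i x| ≤ bound x) (hf_bound : ∀ᵐ x ∂μ, |f x| ≤ bound x)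
    (h_int : Integrable (fun x => bound x ^ 2) μ)
    (h_lim : ∀ᵐ x ∂μ, Tendsto (fun i => F i x) l (𝓝 (f x))) :
    Tendsto (fun i => ∫ x, (F i x - f x) ^ 2 ∂μ) l (𝓝 0) := by
  have h := tendsto_integral_filter_of_dominated_convergence (F := fun i x => (F i x - f x) ^ 2)
    (fun x => 4 * bound x ^ 2)
    (hF_meas.mono fun i hi => (hi.sub hf_meas).pow 2) ?_ (h_int.const_mul 4)
    (h_lim.mono fun x hx => ((hx.sub tendsto_const_nhds).pow 2))
  · simpa using h
  · filter_upwards [hF_bound] with i hi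
    filter_upwards [hi, hf_bound] with x hFx hfx
    rw [Real.norm_eq_abs, abs_of_nonneg (sq_nonneg _)]
    have := abs_sub (F i x) (f x)
    nlinarith [abs_nonneg (F i x - f x), sq_abs (F i x - f x)]

def solitonProfile (c k b x : ℝ) : ℝ := c * sech (k * (|x| - b))

def solitonProfileDeriv (c k b x : ℝ) : ℝ :=
  -(c * k * SignType.sign x * (tanh (k * (|x| - b)) * sech (k * (|x| - b))))

section SolitonProfile

lemma continuous_solitonProfile (c k b : ℝ) : Continuous (solitonProfile c k b) := by
  unfold solitonProfile
  fun_prop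

variable {c k b a : ℝ}

lemma hasDerivAt_solitonProfile {x : ℝ} (hx : x ≠ 0) :
    HasDerivAt (solitonProfile c k b) (solitonProfileDeriv c k b x) x := by
  have hθ := ((hasDerivAt_abs hx).sub_const b).const_mul k
  refine (((hasDerivAt_sech _).comp x hθ).const_mul c).congr_deriv ?_
  rw [solitonProfileDeriv]
  ring

lemma sech_mul_abs_sub_le (ha : 0 ≤ a) (hak : a ≤ k) (hb : b ≤ 0) (x : ℝ) :
    sech (k * (|x| - b)) ≤ 2 * exp (-a * |x|) := by
  refine (sech_le_two_mul_exp_neg _).trans ?_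
  gcongr
  nlinarith [abs_nonneg x]

lemma abs_solitonProfile_le (hc : 0 ≤ c) (ha : 0 ≤ a) (hak : a ≤ k) (hb : b ≤ 0) (x : ℝ) :
    |solitonProfile c k b x| ≤ 2 * c * exp (-a * |x|) := by
  rw [solitonProfile, abs_mul, abs_of_nonneg hc, abs_of_pos (sech_pos _), mul_assoc,
    mul_left_comm 2 c]
  exact mul_le_mul_of_nonneg_left (sech_mul_abs_sub_le ha hak hb x) hc

lemma abs_solitonProfileDeriv_le (hc : 0 ≤ c) (ha : 0 ≤ a) (hak : a ≤ k) (hb : b ≤ 0) (x : ℝ) :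
    |solitonProfileDeriv c k b x| ≤ 2 * (c * k) * exp (-a * |x|) := by
  have hk : 0 ≤ k := ha.trans hak
  have hsign : |(SignType.sign x : ℝ)| ≤ 1 := by
    rcases lt_trichotomy x 0 with h | h | h <;> simp [h]
  rw [solitonProfileDeriv, abs_neg, abs_mul, abs_mul, abs_mul, abs_of_nonneg hc,
    abs_of_nonneg hk, mul_assoc 2]
  calc c * k * |(SignType.sign x : ℝ)| * |tanh (k * (|x| - b)) * sech (k * (|x| - b))|
      ≤ c * k * 1 * sech (k * (|x| - b)) := by
        gcongr
        exact abs_tanh_mul_sech_le _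
    _ ≤ c * k * (2 * exp (-a * |x|)) := by
        rw [mul_one]
        exact mul_le_mul_of_nonneg_left (sech_mul_abs_sub_le ha hak hb x) (by positivity)
    _ = _ := by ring

end SolitonProfile

lemma integrable_sq_mul_exp_neg_mul_abs (M : ℝ) {a : ℝ} (ha : 0 < a) :
    Integrable fun x : ℝ => (M * exp (-a * |x|)) ^ 2 := by
  have h := (integrable_exp_neg_mul_abs (mul_pos two_pos ha)).const_mul (M ^ 2)
  refine h.congr (ae_of_all _ fun x => ?_)
  simp only [mul_pow, ← exp_nat_mul]
  ring_nf

section SolitonFamily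

variable {ι : Type*} {l : Filter ι} [l.IsCountablyGenerated] [l.NeBot] {c k b : ι → ℝ}
  {c₀ k₀ b₀ a : ℝ}

lemma tendsto_integral_sq_sub_solitonProfile (ha : 0 < a)
    (hc : Tendsto c l (𝓝 c₀)) (hk : Tendsto k l (𝓝 k₀)) (hb : Tendsto b l (𝓝 b₀))
    (hc_nonneg : ∀ᶠ i in l, 0 ≤ c i) (hak : ∀ᶠ i in l, a ≤ k i) (hb_nonpos : ∀ᶠ i in l, b i ≤ 0) :
    Tendsto (fun i => ∫ x, (solitonProfile (c i) (k i) (b i) x - solitonProfile c₀ k₀ b₀ x) ^ 2)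
      l (𝓝 0) := by
  have hc_le := hc.eventually_le_const (lt_add_one c₀)
  have hbound : ∀ {c' k' b'}, 0 ≤ c' → c' ≤ c₀ + 1 → a ≤ k' → b' ≤ 0 → ∀ x,
      |solitonProfile c' k' b' x| ≤ 2 * (c₀ + 1) * exp (-a * |x|) := fun hc' hc'_le hak' hb' x =>
    (abs_solitonProfile_le hc' ha.le hak' hb' x).trans (by gcongr)
  refine tendsto_integral_sq_sub_of_dominated (bound := fun x => 2 * (c₀ + 1) * exp (-a * |x|))
    (Eventually.of_forall fun i => ?_) ?_ ?_ ?_ (integrable_sq_mul_exp_neg_mul_abs _ ha)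
    (ae_of_all _ fun x => ?_)
  · exact (continuous_solitonProfile _ _ _).aestronglyMeasurable
  · exact (continuous_solitonProfile _ _ _).aestronglyMeasurable
  · filter_upwards [hc_nonneg, hc_le, hak, hb_nonpos] with i h1 h2 h3 h4
    exact ae_of_all _ (hbound h1 h2 h3 h4)
  · exact ae_of_all _ (hbound (ge_of_tendsto hc hc_nonneg) (lt_add_one c₀).le
      (ge_of_tendsto hk hak) (le_of_tendsto hb hb_nonpos))
  · exact hc.mul ((continuous_sech.tendsto _).comp (hk.mul (tendsto_const_nhds.sub hb)))

lemma tendsto_integral_sq_sub_deriv_solitonProfile (ha : 0 < a)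
    (hc : Tendsto c l (𝓝 c₀)) (hk : Tendsto k l (𝓝 k₀)) (hb : Tendsto b l (𝓝 b₀))
    (hc_nonneg : ∀ᶠ i in l, 0 ≤ c i) (hak : ∀ᶠ i in l, a ≤ k i) (hb_nonpos : ∀ᶠ i in l, b i ≤ 0) :
    Tendsto (fun i => ∫ x in {0}ᶜ,
      (deriv (solitonProfile (c i) (k i) (b i)) x - deriv (solitonProfile c₀ k₀ b₀) x) ^ 2)
      l (𝓝 0) := by
  have hc_le := hc.eventually_le_const (lt_add_one c₀)
  have hk_le := hk.eventually_le_const (lt_add_one k₀)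
  have hbound : ∀ {c' k' b'}, 0 ≤ c' → c' ≤ c₀ + 1 → a ≤ k' → k' ≤ k₀ + 1 → b' ≤ 0 →
      ∀ x, |solitonProfileDeriv c' k' b' x| ≤ 2 * ((c₀ + 1) * (k₀ + 1)) * exp (-a * |x|) :=
    fun hc' hc'_le hak' hk'_le hb' x =>
      (abs_solitonProfileDeriv_le hc' ha.le hak' hb' x).trans
        (by have := ha.le.trans hak'; have := hc'.trans hc'_le; gcongr)
  have hderiv : ∀ᵐ x ∂(volume.restrict {0}ᶜ), ∀ c' k' b' : ℝ,
      deriv (solitonProfile c' k' b') x = solitonProfileDeriv c' k' b' x := by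
    filter_upwards [ae_restrict_mem (measurableSet_singleton 0).compl] with x hx c' k' b'
    exact (hasDerivAt_solitonProfile hx).deriv
  refine tendsto_integral_sq_sub_of_dominated
    (bound := fun x => 2 * ((c₀ + 1) * (k₀ + 1)) * exp (-a * |x|))
    (Eventually.of_forall fun i => (measurable_deriv _).aestronglyMeasurable)
    (measurable_deriv _).aestronglyMeasurable ?_ ?_
    (integrable_sq_mul_exp_neg_mul_abs _ ha).integrableOn ?_
  · filter_upwards [hc_nonneg, hc_le, hak, hk_le, hb_nonpos] with i h1 h2 h3 h4 h5
    filter_upwards [hderiv] with x hx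
    exact hx _ _ _ ▸ hbound h1 h2 h3 h4 h5 x
  · filter_upwards [hderiv] with x hx
    exact hx _ _ _ ▸ hbound (ge_of_tendsto hc hc_nonneg) (lt_add_one c₀).le
      (ge_of_tendsto hk hak) (lt_add_one k₀).le (le_of_tendsto hb hb_nonpos) x
  · filter_upwards [hderiv] with x hx
    simp only [hx]
    have hcont : Continuous fun p : ℝ × ℝ × ℝ => solitonProfileDeriv p.1 p.2.1 p.2.2 x := by
      unfold solitonProfileDeriv
      fun_prop
    exact (hcont.tendsto (c₀, k₀, b₀)).comp (hc.prodMk_nhds (hk.prodMk_nhds hb))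

end SolitonFamily

namespace DeltaSoliton

/- With `m = λρ`: `waveNumber m α = √ω_α`, `amplitude lam m α = √(2ω_α/λ)`, `center m α = x̄_α`. -/

def waveNumber (m α : ℝ) : ℝ := m / 4 + α / 2

def amplitude (lam m α : ℝ) : ℝ := sqrt (2 * waveNumber m α ^ 2 / lam)

def center (m α : ℝ) : ℝ := (2 / (m + 2 * α)) * log (m / (m + 4 * α))

variable {m : ℝ}

lemma waveNumber_zero : waveNumber m 0 = m / 4 := by
  simp [waveNumber]

@[fun_prop]
lemma continuous_waveNumber (m : ℝ) : Continuous (waveNumber m) := by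
  unfold waveNumber
  fun_prop

lemma continuous_amplitude (lam m : ℝ) : Continuous (amplitude lam m) := by
  unfold amplitude
  fun_prop

lemma center_nonpos (hm : 0 < m) {α : ℝ} (hα : 0 ≤ α) : center m α ≤ 0 := by
  refine mul_nonpos_of_nonneg_of_nonpos (by positivity) (log_nonpos (by positivity) ?_)
  rw [div_le_one (by positivity)]
  linarith

lemma tendsto_center (hm : 0 < m) : Tendsto (center m) (𝓝 0) (𝓝 0) := by
  have h : ContinuousAt (center m) 0 := by
    unfold center
    fun_prop (disch := positivity)
  simpa [center, hm.ne'] using h.tendsto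

lemma amplitude_zero {lam ρ : ℝ} (hlam : 0 < lam) (hρ : 0 ≤ ρ) :
    amplitude lam (lam * ρ) 0 = sqrt lam * ρ / (2 * sqrt 2) := by
  have h2 : sqrt 2 ^ 2 = 2 := sq_sqrt zero_le_two
  have hl : sqrt lam ^ 2 = lam := sq_sqrt hlam.le
  rw [amplitude, waveNumber, ← sqrt_sq (by positivity : 0 ≤ sqrt lam * ρ / (2 * sqrt 2))]
  congr 1
  field_simp
  rw [h2, hl]
  ring

end DeltaSoliton

lemma solitonProfile_zero_right {k : ℝ} (hk : 0 ≤ k) (c x : ℝ) :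
    solitonProfile c k 0 x = c * sech (k * x) := by
  rw [solitonProfile, sub_zero, sech, sech, ← cosh_abs (k * x), abs_mul, abs_of_nonneg hk]

open DeltaSoliton in
/-- No-defect limit α → 0+ at fixed mass ρ of the ground state of the cubic NLS with an
attractive Dirac delta potential: φ_α converges in H¹(ℝ) to the free soliton of mass ρ. -/
theorem statement3 (lam ρ : ℝ) (hlam : 0 < lam) (hρ : 0 < ρ)
    (φ : ℝ → ℝ → ℝ)
    (hφ : ∀ α x, φ α x =
      Real.sqrt (2 * (lam * ρ / 4 + α / 2) ^ 2 / lam) *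
        sech ((lam * ρ / 4 + α / 2) *
          (|x| - (2 / (lam * ρ + 2 * α)) * Real.log (lam * ρ / (lam * ρ + 4 * α)))))
    (g : ℝ → ℝ)
    (hg : ∀ x, g x = (Real.sqrt lam * ρ / (2 * Real.sqrt 2)) * sech ((lam * ρ / 4) * x)) :
    Tendsto (fun α : ℝ =>
        (∫ x : ℝ, (φ α x - g x) ^ 2)
          + ∫ x in ({(0:ℝ)}ᶜ : Set ℝ), (deriv (φ α) x - deriv g x) ^ 2)
      (𝓝[>] 0) (𝓝 0) := by
  have hm : 0 < lam * ρ := mul_pos hlam hρ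
  have hφ_eq : φ = fun α => solitonProfile (amplitude lam (lam * ρ) α) (waveNumber (lam * ρ) α)
      (center (lam * ρ) α) := funext fun α => funext (hφ α)
  have hg_eq : g = solitonProfile (sqrt lam * ρ / (2 * sqrt 2)) (lam * ρ / 4) 0 := by
    ext x
    rw [hg, solitonProfile_zero_right (by positivity)]
  subst hφ_eq hg_eq
  have hpos : ∀ᶠ α in 𝓝[>] (0 : ℝ), 0 < α := self_mem_nhdsWithin
  have hc : Tendsto (amplitude lam (lam * ρ)) (𝓝[>] 0) (𝓝 (sqrt lam * ρ / (2 * sqrt 2))) := by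
    rw [← amplitude_zero hlam hρ.le]
    exact (continuous_amplitude _ _).continuousWithinAt
  have hk : Tendsto (waveNumber (lam * ρ)) (𝓝[>] 0) (𝓝 (lam * ρ / 4)) := by
    rw [← waveNumber_zero]
    exact (continuous_waveNumber _).continuousWithinAt
  have hb := (tendsto_center hm).mono_left (nhdsWithin_le_nhds (s := Ioi 0))
  have hc_nonneg : ∀ᶠ α in 𝓝[>] (0 : ℝ), 0 ≤ amplitude lam (lam * ρ) α :=
    .of_forall fun α => sqrt_nonneg _
  have hak : ∀ᶠ α in 𝓝[>] (0 : ℝ), lam * ρ / 4 ≤ waveNumber (lam * ρ) α :=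
    hpos.mono fun α hα => by unfold waveNumber; linarith
  have hb_nonpos := hpos.mono fun α hα => center_nonpos hm hα.le
  simpa using (tendsto_integral_sq_sub_solitonProfile (by positivity) hc hk hb hc_nonneg hak
    hb_nonpos).add
    (tendsto_integral_sq_sub_deriv_solitonProfile (by positivity) hc hk hb hc_nonneg hak hb_nonpos)

end
end

section
/- Let γ > 0 and ω > 0, and consider the system t₁² − t₁⁴ = t₂² − t₂⁴, 1/t₁ + 1/t₂ = γ√ω in the unknowns (t₁, t₂) with 0 < t₁ < 1 and 0 < t₂ < 1. Then: (1) if ω ≤ 4/γ² the system has no solution; (2) if ω > 4/γ² then t₁ = t₂ = 2/(γ√ω) is a solution, and if moreover ω ≤ 8/γ² it is the only solution. -/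
/-!
Put `s = γ√ω = √(γ²ω)`. Since `1/t > 1` on `(0, 1)`, the second equation needs `s > 2`, i.e.
`γ²ω > 4`. The first equation factors as `(t₁² - t₂²)(1 - t₁² - t₂²) = 0`. On the branch
`t₁² + t₂² = 1`, squaring `t₁ + t₂ = s t₁ t₂` gives `1 + 2p = s²p²` with `p = t₁t₂ ≤ 1/2`, which
for `s² ≤ 8` leaves only `p = 1/2`, i.e. `t₁ = t₂`.
-/

open Real

lemma sq_sub_pow_four_eq_iff {R : Type*} [CommRing R] [NoZeroDivisors R] {a b : R} :
    a ^ 2 - a ^ 4 = b ^ 2 - b ^ 4 ↔ a ^ 2 = b ^ 2 ∨ a ^ 2 + b ^ 2 = 1 := by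
  have factor : a ^ 2 - a ^ 4 - (b ^ 2 - b ^ 4) = (a ^ 2 - b ^ 2) * (1 - (a ^ 2 + b ^ 2)) := by
    ring
  rw [← sub_eq_zero, factor, mul_eq_zero, sub_eq_zero, sub_eq_zero, eq_comm (a := (1 : R))]

section OrderedField

variable {K : Type*} [Field K] [LinearOrder K] [IsStrictOrderedRing K]

lemma two_lt_one_div_add_one_div {a b : K} (ha : 0 < a) (ha1 : a < 1) (hb : 0 < b) (hb1 : b < 1) :
    2 < 1 / a + 1 / b := by
  have h₁ : 1 < 1 / a := by rwa [lt_one_div one_pos ha, div_one]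
  have h₂ : 1 < 1 / b := by rwa [lt_one_div one_pos hb, div_one]
  linarith

lemma eq_of_sq_add_sq_eq_one {a b : K} (ha : 0 < a) (hb : 0 < b) (hcircle : a ^ 2 + b ^ 2 = 1)
    (hbound : (a + b) ^ 2 ≤ 8 * (a * b) ^ 2) : a = b := by
  have hab : 0 < a * b := mul_pos ha hb
  have hexpand : (a + b) ^ 2 = 1 + 2 * (a * b) := by linear_combination hcircle
  have hprod : 1 / 2 ≤ a * b := by nlinarith
  nlinarith [sq_nonneg (a - b)]

lemma eq_of_sq_sub_pow_four_eq {a b s : K} (ha : 0 < a) (hb : 0 < b)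
    (hquartic : a ^ 2 - a ^ 4 = b ^ 2 - b ^ 4) (hsum : 1 / a + 1 / b = s) (hs : s ^ 2 ≤ 8) :
    a = b := by
  rcases sq_sub_pow_four_eq_iff.mp hquartic with hsq | hcircle
  · exact (pow_left_inj₀ ha.le hb.le two_ne_zero).mp hsq
  · refine eq_of_sq_add_sq_eq_one ha hb hcircle ?_
    have hlin : a + b = s * (a * b) := by
      rw [← hsum]; field_simp; ring
    calc (a + b) ^ 2 = s ^ 2 * (a * b) ^ 2 := by rw [hlin]; ring
      _ ≤ 8 * (a * b) ^ 2 := by gcongr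

lemma eq_two_div_of_one_div_add_one_div_self {t s : K} (ht : 0 < t) (hsum : 1 / t + 1 / t = s) :
    t = 2 / s := by
  rw [← hsum]; field_simp; ring

end OrderedField

theorem statement5_general (γ ω : ℝ) (hγ : 0 < γ) :
    (ω ≤ 4 / γ ^ 2 →
      ¬ ∃ t₁ t₂ : ℝ, 0 < t₁ ∧ t₁ < 1 ∧ 0 < t₂ ∧ t₂ < 1 ∧
        t₁ ^ 2 - t₁ ^ 4 = t₂ ^ 2 - t₂ ^ 4 ∧ 1 / t₁ + 1 / t₂ = γ * Real.sqrt ω) ∧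
    (4 / γ ^ 2 < ω →
      (0 < 2 / (γ * Real.sqrt ω) ∧ 2 / (γ * Real.sqrt ω) < 1 ∧
        (2 / (γ * Real.sqrt ω)) ^ 2 - (2 / (γ * Real.sqrt ω)) ^ 4
          = (2 / (γ * Real.sqrt ω)) ^ 2 - (2 / (γ * Real.sqrt ω)) ^ 4 ∧
        1 / (2 / (γ * Real.sqrt ω)) + 1 / (2 / (γ * Real.sqrt ω)) = γ * Real.sqrt ω) ∧
      (ω ≤ 8 / γ ^ 2 →
        ∀ t₁ t₂ : ℝ, 0 < t₁ → t₁ < 1 → 0 < t₂ → t₂ < 1 →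
          t₁ ^ 2 - t₁ ^ 4 = t₂ ^ 2 - t₂ ^ 4 → 1 / t₁ + 1 / t₂ = γ * Real.sqrt ω →
          t₁ = 2 / (γ * Real.sqrt ω) ∧ t₂ = 2 / (γ * Real.sqrt ω))) := by
  have hs : γ * √ω = √(γ ^ 2 * ω) := by rw [sqrt_mul (sq_nonneg γ), sqrt_sq hγ.le]
  have hγ2 : 0 < γ ^ 2 := by positivity
  refine ⟨fun hω => ?_, fun hω => ?_⟩
  · rintro ⟨t₁, t₂, h₁, h₁', h₂, h₂', -, hsum⟩
    have hle : γ * √ω ≤ 2 := by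
      rw [hs, sqrt_le_left zero_le_two, ← le_div_iff₀' hγ2]
      linarith
    linarith [two_lt_one_div_add_one_div h₁ h₁' h₂ h₂']
  · have hω' : 4 < γ ^ 2 * ω := by rwa [div_lt_iff₀' hγ2] at hω
    have hlt : 2 < γ * √ω := by rw [hs, lt_sqrt zero_le_two]; linarith
    refine ⟨⟨by positivity, (div_lt_one (by positivity)).mpr hlt, rfl, by field_simp; ring⟩, ?_⟩
    intro h8 t₁ t₂ h₁ _ h₂ _ hquartic hsum
    have hsq : (γ * √ω) ^ 2 ≤ 8 := by
      rw [hs, sq_sqrt (by linarith), ← le_div_iff₀' hγ2]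
      exact h8
    obtain rfl := eq_of_sq_sub_pow_four_eq h₁ h₂ hquartic hsum hsq
    exact ⟨eq_two_div_of_one_div_add_one_div_self h₁ hsum,
      eq_two_div_of_one_div_add_one_div_self h₁ hsum⟩

/-- The system T₋ : t₁² − t₁⁴ = t₂² − t₂⁴, 1/t₁ + 1/t₂ = γ√ω with 0 < t₁ < 1, 0 < t₂ < 1:
(1) if ω ≤ 4/γ² there is no solution; (2) if ω > 4/γ² then t₁ = t₂ = 2/(γ√ω) is a solution,
and it is the only one when moreover ω ≤ 8/γ². -/
theorem statement5 (γ ω : ℝ) (hγ : 0 < γ) (hω : 0 < ω) :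
    (ω ≤ 4 / γ ^ 2 →
      ¬ ∃ t₁ t₂ : ℝ, 0 < t₁ ∧ t₁ < 1 ∧ 0 < t₂ ∧ t₂ < 1 ∧
        t₁ ^ 2 - t₁ ^ 4 = t₂ ^ 2 - t₂ ^ 4 ∧ 1 / t₁ + 1 / t₂ = γ * Real.sqrt ω) ∧
    (4 / γ ^ 2 < ω →
      (0 < 2 / (γ * Real.sqrt ω) ∧ 2 / (γ * Real.sqrt ω) < 1 ∧
        (2 / (γ * Real.sqrt ω)) ^ 2 - (2 / (γ * Real.sqrt ω)) ^ 4
          = (2 / (γ * Real.sqrt ω)) ^ 2 - (2 / (γ * Real.sqrt ω)) ^ 4 ∧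
        1 / (2 / (γ * Real.sqrt ω)) + 1 / (2 / (γ * Real.sqrt ω)) = γ * Real.sqrt ω) ∧
      (ω ≤ 8 / γ ^ 2 →
        ∀ t₁ t₂ : ℝ, 0 < t₁ → t₁ < 1 → 0 < t₂ → t₂ < 1 →
          t₁ ^ 2 - t₁ ^ 4 = t₂ ^ 2 - t₂ ^ 4 → 1 / t₁ + 1 / t₂ = γ * Real.sqrt ω →
          t₁ = 2 / (γ * Real.sqrt ω) ∧ t₂ = 2 / (γ * Real.sqrt ω))) :=
  statement5_general γ ω hγ
end

section
/- Let γ > 0, λ > 0, ω > 0, and let (t₁, t₂) be given by t₁ = (1 − √(1 + γ²ω) + √(γ²ω − 2 + 2√(1 + γ²ω)))/(2γ√ω), t₂ = (−1 + √(1 + γ²ω) + √(γ²ω − 2 + 2√(1 + γ²ω)))/(2γ√ω). Set x₁ := (1/(2√ω))·log((1 + t₁)/(1 − t₁)) and x₂ := (1/(2√ω))·log((1 + t₂)/(1 − t₂)), and define ψ(x) := √(2ω/λ)·sech(√ω(x − x₁)) for x < 0 and ψ(x) := √(2ω/λ)·sech(√ω(x − x₂)) for x > 0. Then ψ satisfies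 −ψ''(x) + ωψ(x) − λψ(x)³ = 0 for all x ≠ 0, ψ'(0+) = ψ'(0−), and ψ(0+) − ψ(0−) = −γψ'(0+); i.e., ψ is a (positive, asymmetric) stationary state of the cubic NLS with a delta-prime interaction of strength γ. -/
/-
On each half-line ψ is a translate of the soliton `A sech (√ω y)`, `A = √(2ω/λ)`, which solves
`-f'' + ωf - λf³ = 0` on all of ℝ. The centres are `xᵢ = artanh tᵢ / √ω`, so at the origin the
branch centred at `xᵢ` has value `A √(1 - tᵢ²)` and slope `A √ω tᵢ √(1 - tᵢ²)`. The explicit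
`t₁, t₂` satisfy `t₁² + t₂² = 1`, whence both slopes equal `A √ω t₁ t₂`, and
`t₂ - t₁ = γ √ω t₁ t₂`, which is the jump condition.
-/

open MeasureTheory Real Filter Set Topology

noncomputable section

def sechProfile (A a c : ℝ) (y : ℝ) : ℝ := A * sech (a * (y - c))

section sechProfile

variable (A a c : ℝ)

lemma hasDerivAt_sechProfile (y : ℝ) :
    HasDerivAt (sechProfile A a c)
      (-(A * a) * (sinh (a * (y - c)) / cosh (a * (y - c)) ^ 2)) y := by
  have hlin : HasDerivAt (fun y : ℝ => a * (y - c)) a y := by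
    simpa using ((hasDerivAt_id y).sub_const c).const_mul a
  have hcosh : HasDerivAt (fun z => cosh (a * (z - c))) (sinh (a * (y - c)) * a) y :=
    (hasDerivAt_cosh _).comp y hlin
  have hfun : sechProfile A a c = fun z => A * (cosh (a * (z - c)))⁻¹ :=
    funext fun z => by simp [sechProfile, sech]
  rw [hfun]
  refine ((hcosh.inv (cosh_pos _).ne').const_mul A).congr_deriv ?_
  ring

lemma deriv_sechProfile :
    deriv (sechProfile A a c) =
      fun y => -(A * a) * (sinh (a * (y - c)) / cosh (a * (y - c)) ^ 2) :=
  funext fun y => (hasDerivAt_sechProfile A a c y).deriv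

lemma hasDerivAt_deriv_sechProfile (y : ℝ) :
    HasDerivAt (deriv (sechProfile A a c))
      (A * a ^ 2 * ((cosh (a * (y - c)) ^ 2 - 2) / cosh (a * (y - c)) ^ 3)) y := by
  have hlin : HasDerivAt (fun y : ℝ => a * (y - c)) a y := by
    simpa using ((hasDerivAt_id y).sub_const c).const_mul a
  have hsinh : HasDerivAt (fun z => sinh (a * (z - c))) (cosh (a * (y - c)) * a) y :=
    (hasDerivAt_sinh _).comp y hlin
  have hcosh : HasDerivAt (fun z => cosh (a * (z - c))) (sinh (a * (y - c)) * a) y :=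
    (hasDerivAt_cosh _).comp y hlin
  have := (cosh_pos (a * (y - c))).ne'
  rw [deriv_sechProfile]
  refine ((hsinh.div (hcosh.pow 2) (pow_ne_zero 2 this)).const_mul (-(A * a))).congr_deriv ?_
  simp only [Pi.pow_apply, Nat.cast_ofNat, Nat.add_one_sub_one, pow_one]
  field_simp
  linear_combination (2 * A * a ^ 2) * sinh_sq (a * (y - c))

lemma sechProfile_ode {lam : ℝ} (hA : lam * A ^ 2 = 2 * a ^ 2) (y : ℝ) :
    -deriv (deriv (sechProfile A a c)) y + a ^ 2 * sechProfile A a c y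
      - lam * sechProfile A a c y ^ 3 = 0 := by
  rw [(hasDerivAt_deriv_sechProfile A a c y).deriv, sechProfile, sech]
  have := (cosh_pos (a * (y - c))).ne'
  field_simp
  linear_combination (-A) * hA

variable {a} {t : ℝ}

lemma sechProfile_artanh_zero (ha : a ≠ 0) (ht : t ∈ Ioo (-1) 1) :
    sechProfile A a (artanh t / a) 0 = A * √(1 - t ^ 2) := by
  rw [sechProfile, sech, show a * (0 - artanh t / a) = -artanh t by field_simp; ring, cosh_neg,
    cosh_artanh ht, one_div_one_div]

lemma deriv_sechProfile_artanh_zero (ha : a ≠ 0) (ht : t ∈ Ioo (-1) 1) :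
    deriv (sechProfile A a (artanh t / a)) 0 = A * a * t * √(1 - t ^ 2) := by
  have hpos : 0 < √(1 - t ^ 2) := sqrt_pos.mpr (by nlinarith [ht.1, ht.2])
  rw [deriv_sechProfile]
  dsimp only
  rw [show a * (0 - artanh t / a) = -artanh t by field_simp; ring, cosh_neg,
    sinh_neg, cosh_artanh ht, sinh_artanh ht]
  field_simp

end sechProfile

lemma tendsto_nhdsWithin_of_eqOn {α β : Type*} [TopologicalSpace α] [TopologicalSpace β]
    {ψ f : α → β} {s : Set α} {x : α} (h : EqOn ψ f s) (hf : ContinuousAt f x) :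
    Tendsto ψ (𝓝[s] x) (𝓝 (f x)) :=
  tendsto_nhdsWithin_congr (fun _ hy => (h hy).symm) hf.continuousWithinAt

lemma mem_Ioo_of_sq_add_sq_eq_one {t u : ℝ} (hu : 0 < u) (h : t ^ 2 + u ^ 2 = 1) :
    t ∈ Ioo (-1) 1 :=
  ⟨by nlinarith, by nlinarith⟩

lemma sqrt_one_sub_sq_eq_of_sq_add_sq_eq_one {t u : ℝ} (hu : 0 ≤ u) (h : t ^ 2 + u ^ 2 = 1) :
    √(1 - t ^ 2) = u := by
  rw [← sqrt_sq hu]; congr 1; linarith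

lemma half_log_div_eq_artanh_div {t : ℝ} (ht : t ∈ Ioo (-1) 1) (a : ℝ) :
    1 / (2 * a) * log ((1 + t) / (1 - t)) = artanh t / a := by
  rw [artanh_eq_half_log (Ioo_subset_Icc_self ht)]; field_simp

lemma deltaPrime_params {s t₁ t₂ : ℝ} (hs : 0 < s)
    (ht₁ : t₁ = (1 - √(1 + s ^ 2) + √(s ^ 2 - 2 + 2 * √(1 + s ^ 2))) / (2 * s))
    (ht₂ : t₂ = (-1 + √(1 + s ^ 2) + √(s ^ 2 - 2 + 2 * √(1 + s ^ 2))) / (2 * s)) :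
    0 < t₁ ∧ 0 < t₂ ∧ t₁ ^ 2 + t₂ ^ 2 = 1 ∧ t₂ - t₁ = s * (t₁ * t₂) := by
  set S := √(1 + s ^ 2)
  have hS2 : S ^ 2 = 1 + s ^ 2 := sq_sqrt (by positivity)
  have hS1 : 1 < S := by nlinarith [sqrt_nonneg (1 + s ^ 2)]
  set R := √(s ^ 2 - 2 + 2 * S)
  have hR2 : R ^ 2 = s ^ 2 - 2 + 2 * S := sq_sqrt (by nlinarith)
  have hRS : S - 1 < R := by nlinarith [sqrt_nonneg (s ^ 2 - 2 + 2 * S)]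
  refine ⟨?_, ?_, ?_, ?_⟩
  · rw [ht₁]; exact div_pos (by linarith) (by positivity)
  · rw [ht₂]; exact div_pos (by linarith) (by positivity)
  · rw [ht₁, ht₂]; field_simp; linear_combination 2 * hR2 + 2 * hS2
  · rw [ht₁, ht₂]; field_simp; linear_combination hS2 - hR2

/-- The asymmetric non-sign-changing stationary state of the cubic NLS with a delta-prime
interaction of strength γ: it solves −ψ'' + ωψ − λψ³ = 0 away from the origin, and satisfies
ψ'(0+) = ψ'(0−) and ψ(0+) − ψ(0−) = −γψ'(0+). -/
theorem statement8 (γ lam ω : ℝ) (hγ : 0 < γ) (hlam : 0 < lam) (hω : 0 < ω)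
    (t₁ t₂ x₁ x₂ : ℝ)
    (ht₁ : t₁ = (1 - Real.sqrt (1 + γ ^ 2 * ω)
        + Real.sqrt (γ ^ 2 * ω - 2 + 2 * Real.sqrt (1 + γ ^ 2 * ω)))
      / (2 * γ * Real.sqrt ω))
    (ht₂ : t₂ = (-1 + Real.sqrt (1 + γ ^ 2 * ω)
        + Real.sqrt (γ ^ 2 * ω - 2 + 2 * Real.sqrt (1 + γ ^ 2 * ω)))
      / (2 * γ * Real.sqrt ω))
    (hx₁ : x₁ = (1 / (2 * Real.sqrt ω)) * Real.log ((1 + t₁) / (1 - t₁)))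
    (hx₂ : x₂ = (1 / (2 * Real.sqrt ω)) * Real.log ((1 + t₂) / (1 - t₂)))
    (ψ : ℝ → ℝ)
    (hψ : ∀ x, ψ x = if x < 0
      then Real.sqrt (2 * ω / lam) * sech (Real.sqrt ω * (x - x₁))
      else Real.sqrt (2 * ω / lam) * sech (Real.sqrt ω * (x - x₂))) :
    (∀ x : ℝ, x ≠ 0 → -(deriv (deriv ψ) x) + ω * ψ x - lam * (ψ x) ^ 3 = 0) ∧
    (∃ d : ℝ,
      Tendsto (deriv ψ) (𝓝[>] 0) (𝓝 d) ∧
      Tendsto (deriv ψ) (𝓝[<] 0) (𝓝 d) ∧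
      ∃ p m : ℝ,
        Tendsto ψ (𝓝[>] 0) (𝓝 p) ∧
        Tendsto ψ (𝓝[<] 0) (𝓝 m) ∧
        p - m = -γ * d) := by
  set a := √ω
  set A := √(2 * ω / lam)
  have ha : 0 < a := sqrt_pos.mpr hω
  have ha2 : a ^ 2 = ω := sq_sqrt hω.le
  have hA : lam * A ^ 2 = 2 * a ^ 2 := by
    rw [sq_sqrt (by positivity), ha2]; field_simp
  rw [show γ ^ 2 * ω = (γ * a) ^ 2 by rw [mul_pow, ha2], show 2 * γ * a = 2 * (γ * a) by ring]
    at ht₁ ht₂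
  obtain ⟨ht₁pos, ht₂pos, hsum, hjump⟩ := deltaPrime_params (by positivity) ht₁ ht₂
  have hsum' : t₂ ^ 2 + t₁ ^ 2 = 1 := by linarith
  have ht₁mem := mem_Ioo_of_sq_add_sq_eq_one ht₂pos hsum
  have ht₂mem := mem_Ioo_of_sq_add_sq_eq_one ht₁pos hsum'
  have hu₁ := sqrt_one_sub_sq_eq_of_sq_add_sq_eq_one ht₂pos.le hsum
  have hu₂ := sqrt_one_sub_sq_eq_of_sq_add_sq_eq_one ht₁pos.le hsum'
  rw [half_log_div_eq_artanh_div ht₁mem] at hx₁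
  rw [half_log_div_eq_artanh_div ht₂mem] at hx₂
  have hL : EqOn ψ (sechProfile A a x₁) (Iio 0) := fun x (hx : x < 0) => by
    rw [hψ, if_pos hx]; rfl
  have hR : EqOn ψ (sechProfile A a x₂) (Ioi 0) := fun x (hx : 0 < x) => by
    rw [hψ, if_neg hx.not_gt]; rfl
  refine ⟨fun x hx => ?_, A * a * (t₁ * t₂), ?_, ?_, A * t₁, A * t₂, ?_, ?_, ?_⟩
  · rw [← ha2]
    rcases hx.lt_or_gt with hx | hx
    · rw [(hL.deriv isOpen_Iio).deriv isOpen_Iio hx, hL hx]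
      exact sechProfile_ode A a x₁ hA x
    · rw [(hR.deriv isOpen_Ioi).deriv isOpen_Ioi hx, hR hx]
      exact sechProfile_ode A a x₂ hA x
  · convert tendsto_nhdsWithin_of_eqOn (hR.deriv isOpen_Ioi)
      (hasDerivAt_deriv_sechProfile A a x₂ 0).continuousAt using 2
    rw [hx₂, deriv_sechProfile_artanh_zero A ha.ne' ht₂mem, hu₂]; ring
  · convert tendsto_nhdsWithin_of_eqOn (hL.deriv isOpen_Iio)
      (hasDerivAt_deriv_sechProfile A a x₁ 0).continuousAt using 2
    rw [hx₁, deriv_sechProfile_artanh_zero A ha.ne' ht₁mem, hu₁]; ring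
  · convert tendsto_nhdsWithin_of_eqOn hR (hasDerivAt_sechProfile A a x₂ 0).continuousAt using 2
    rw [hx₂, sechProfile_artanh_zero A ha.ne' ht₂mem, hu₂]
  · convert tendsto_nhdsWithin_of_eqOn hL (hasDerivAt_sechProfile A a x₁ 0).continuousAt using 2
    rw [hx₁, sechProfile_artanh_zero A ha.ne' ht₁mem, hu₁]
  · linear_combination (-A) * hjump
end
end

section
/- Let γ > 0, λ > 0 and ω > 8/γ². Set t₁ := (1 + √(1 + γ²ω) + √(γ²ω − 2 − 2√(1 + γ²ω)))/(2γ√ω), t₂ := (1 + √(1 + γ²ω) − √(γ²ω − 2 − 2√(1 + γ²ω)))/(2γ√ω), x̄₁ := (1/(2√ω))·log((1 + t₁)/(1 − t₁)), x̄₂ := −(1/(2√ω))·log((1 + t₂)/(1 − t₂)), and define ψ(x) := √(2ω/λ)·sech(√ω(x − x̄₁)) for x < 0 and ψ(x) := −√(2ω/λ)·sech(√ω(x − x̄₂)) for x > 0. Then ψ satisfies −ψ''(x) + ωψ(x) − λψ(x)³ = 0 for all x ≠ 0, ψ'(0+) = ψ'(0−), and ψ(0+) − ψ(0−) = −γψ'(0+);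 i.e., ψ is a sign-changing asymmetric stationary state of the cubic NLS with a delta-prime interaction of strength γ. -/
/-!
On each half-line `ψ` is a translate of `±√(2ω/λ) sech (√ω x)`, which solves
`-ψ'' + ωψ - λψ³ = 0` because `sech'' = sech - 2 sech³`. The shifts are `√ω x̄₁ = artanh t₁` and
`√ω x̄₂ = -artanh t₂`, and `sech (artanh t) = √(1 - t²)`, `sinh (artanh t) sech² (artanh t) =
t √(1 - t²)`. Since `t₁² + t₂² = 1`, this gives `ψ(0-) = A t₂`, `ψ(0+) = -A t₁` and
`ψ'(0±) = A √ω t₁ t₂` with `A = √(2ω/λ)`, so the jump condition reduces to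
`t₁ + t₂ = γ √ω t₁ t₂`. Up to order, the given `t₁, t₂` are the positive solutions of these
two equations; they are real exactly when `γ²ω ≥ 8`.
-/

open MeasureTheory Real Filter Set Topology

noncomputable section

lemma sech_neg (x : ℝ) : sech (-x) = sech x := by
  simp only [sech, cosh_neg]

lemma hasDerivAt_sech_s10 (x : ℝ) : HasDerivAt sech (-(sinh x * sech x ^ 2)) x :=
  ((hasDerivAt_const x 1).div (hasDerivAt_cosh x) (cosh_pos x).ne').congr_deriv
    (by rw [sech]; ring)

lemma hasDerivAt_sinh_mul_sech_sq (x : ℝ) :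
    HasDerivAt (fun y => sinh y * sech y ^ 2) (2 * sech x ^ 3 - sech x) x := by
  refine ((hasDerivAt_sinh x).mul ((hasDerivAt_sech_s10 x).pow 2)).congr_deriv ?_
  have hc : cosh x ≠ 0 := (cosh_pos x).ne'
  simp only [Pi.pow_apply, sech, Nat.cast_ofNat, Nat.reduceSub, pow_one]
  field_simp
  linear_combination 2 * cosh_sq x

lemma sech_artanh_of_sq_add_sq {t u : ℝ} (h : t ^ 2 + u ^ 2 = 1) (hu : 0 < u) :
    sech (artanh t) = u := by
  rw [sech, cosh_artanh ⟨by nlinarith, by nlinarith⟩, one_div_one_div,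
    show 1 - t ^ 2 = u ^ 2 by linarith, sqrt_sq hu.le]

lemma sinh_mul_sech_sq_artanh_of_sq_add_sq {t u : ℝ} (h : t ^ 2 + u ^ 2 = 1) (hu : 0 < u) :
    sinh (artanh t) * sech (artanh t) ^ 2 = t * u := by
  rw [sinh_artanh ⟨by nlinarith, by nlinarith⟩, sech_artanh_of_sq_add_sq h hu,
    show 1 - t ^ 2 = u ^ 2 by linarith, sqrt_sq hu.le]
  field_simp

def soliton (A k a x : ℝ) : ℝ := A * sech (k * (x - a))

section soliton

variable (A k a : ℝ)

lemma hasDerivAt_soliton (x : ℝ) :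
    HasDerivAt (soliton A k a) (-(A * k) * (sinh (k * (x - a)) * sech (k * (x - a)) ^ 2)) x :=
  (((hasDerivAt_sech_s10 _).comp x (((hasDerivAt_id x).sub_const a).const_mul k)).const_mul
    A).congr_deriv (by simp only [id, mul_one]; ring)

lemma deriv_soliton :
    deriv (soliton A k a) = fun x => -(A * k) * (sinh (k * (x - a)) * sech (k * (x - a)) ^ 2) :=
  funext fun x => (hasDerivAt_soliton A k a x).deriv

lemma hasDerivAt_deriv_soliton (x : ℝ) :
    HasDerivAt (deriv (soliton A k a))
      (-(A * k ^ 2) * (2 * sech (k * (x - a)) ^ 3 - sech (k * (x - a)))) x := by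
  rw [deriv_soliton]
  exact (((hasDerivAt_sinh_mul_sech_sq _).comp x
    (((hasDerivAt_id x).sub_const a).const_mul k)).const_mul (-(A * k))).congr_deriv
    (by simp only [id, mul_one]; ring)

variable {A k a}

lemma soliton_ode {lam : ℝ} (hA : lam * A ^ 2 = 2 * k ^ 2) (x : ℝ) :
    -deriv (deriv (soliton A k a)) x + k ^ 2 * soliton A k a x - lam * soliton A k a x ^ 3 =
      0 := by
  rw [(hasDerivAt_deriv_soliton A k a x).deriv, soliton]
  linear_combination (-(A * sech (k * (x - a)) ^ 3)) * hA

lemma soliton_ode_of_eqOn {ψ : ℝ → ℝ} {s : Set ℝ} (hs : IsOpen s) (h : EqOn ψ (soliton A k a) s)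
    {lam : ℝ} (hA : lam * A ^ 2 = 2 * k ^ 2) {x : ℝ} (hx : x ∈ s) :
    -deriv (deriv ψ) x + k ^ 2 * ψ x - lam * ψ x ^ 3 = 0 := by
  rw [(h.deriv hs).deriv hs hx, h hx]
  exact soliton_ode hA x

lemma tendsto_of_eqOn_soliton {ψ : ℝ → ℝ} {s : Set ℝ} (h : EqOn ψ (soliton A k a) s) (x : ℝ) :
    Tendsto ψ (𝓝[s] x) (𝓝 (soliton A k a x)) :=
  tendsto_nhdsWithin_congr (fun _ hy => (h hy).symm)
    (hasDerivAt_soliton A k a x).continuousAt.continuousWithinAt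

lemma tendsto_deriv_of_eqOn_soliton {ψ : ℝ → ℝ} {s : Set ℝ} (hs : IsOpen s)
    (h : EqOn ψ (soliton A k a) s) (x : ℝ) :
    Tendsto (deriv ψ) (𝓝[s] x) (𝓝 (deriv (soliton A k a) x)) :=
  tendsto_nhdsWithin_congr (fun _ hy => (h.deriv hs hy).symm)
    (hasDerivAt_deriv_soliton A k a x).continuousAt.continuousWithinAt

end soliton

lemma pos_and_sq_add_sq_and_add_eq {c t₁ t₂ : ℝ} (hc : 0 < c) (hc8 : 8 ≤ c ^ 2)
    (ht₁ : t₁ = (1 + √(1 + c ^ 2) + √(c ^ 2 - 2 - 2 * √(1 + c ^ 2))) / (2 * c))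
    (ht₂ : t₂ = (1 + √(1 + c ^ 2) - √(c ^ 2 - 2 - 2 * √(1 + c ^ 2))) / (2 * c)) :
    0 < t₁ ∧ 0 < t₂ ∧ t₁ ^ 2 + t₂ ^ 2 = 1 ∧ t₁ + t₂ = c * (t₁ * t₂) := by
  set s := √(1 + c ^ 2)
  set r := √(c ^ 2 - 2 - 2 * s)
  have hs : s ^ 2 = 1 + c ^ 2 := sq_sqrt (by positivity)
  have hs0 : 0 ≤ s := sqrt_nonneg _
  have hr : r ^ 2 = c ^ 2 - 2 - 2 * s := by
    refine sq_sqrt ?_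
    have : 2 * s ≤ c ^ 2 - 2 := abs_le_of_sq_le_sq' (by nlinarith) (by linarith) |>.2
    linarith
  have hr0 : 0 ≤ r := sqrt_nonneg _
  have hrs : r < 1 + s := by nlinarith
  refine ⟨?_, ?_, ?_, ?_⟩
  · rw [ht₁]; positivity
  · rw [ht₂]; exact div_pos (by linarith) (by positivity)
  · rw [ht₁, ht₂]; field_simp; linear_combination 2 * hs + 2 * hr
  · rw [ht₁, ht₂]; field_simp; linear_combination hr - hs

/-- The sign-changing asymmetric stationary state of the cubic NLS with a delta-prime
interaction of strength γ, for ω > 8/γ²: it solves −ψ'' + ωψ − λψ³ = 0 away from the origin,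
and satisfies ψ'(0+) = ψ'(0−) and ψ(0+) − ψ(0−) = −γψ'(0+). -/
theorem statement10 (γ lam ω : ℝ) (hγ : 0 < γ) (hlam : 0 < lam) (hω : 8 / γ ^ 2 < ω)
    (t₁ t₂ xbar₁ xbar₂ : ℝ)
    (ht₁ : t₁ = (1 + Real.sqrt (1 + γ ^ 2 * ω)
        + Real.sqrt (γ ^ 2 * ω - 2 - 2 * Real.sqrt (1 + γ ^ 2 * ω)))
      / (2 * γ * Real.sqrt ω))
    (ht₂ : t₂ = (1 + Real.sqrt (1 + γ ^ 2 * ω)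
        - Real.sqrt (γ ^ 2 * ω - 2 - 2 * Real.sqrt (1 + γ ^ 2 * ω)))
      / (2 * γ * Real.sqrt ω))
    (hxbar₁ : xbar₁ = (1 / (2 * Real.sqrt ω)) * Real.log ((1 + t₁) / (1 - t₁)))
    (hxbar₂ : xbar₂ = -(1 / (2 * Real.sqrt ω)) * Real.log ((1 + t₂) / (1 - t₂)))
    (ψ : ℝ → ℝ)
    (hψ : ∀ x, ψ x = if x < 0
      then Real.sqrt (2 * ω / lam) * sech (Real.sqrt ω * (x - xbar₁))
      else -(Real.sqrt (2 * ω / lam) * sech (Real.sqrt ω * (x - xbar₂)))) :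
    (∀ x : ℝ, x ≠ 0 → -(deriv (deriv ψ) x) + ω * ψ x - lam * (ψ x) ^ 3 = 0) ∧
    (∃ d : ℝ,
      Tendsto (deriv ψ) (𝓝[>] 0) (𝓝 d) ∧
      Tendsto (deriv ψ) (𝓝[<] 0) (𝓝 d) ∧
      ∃ p m : ℝ,
        Tendsto ψ (𝓝[>] 0) (𝓝 p) ∧
        Tendsto ψ (𝓝[<] 0) (𝓝 m) ∧
        p - m = -γ * d) := by
  have hγ2 : 0 < γ ^ 2 := by positivity
  have hω0 : 0 < ω := (div_pos (by norm_num) hγ2).trans hω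
  set k := √ω
  have hk0 : 0 < k := sqrt_pos.mpr hω0
  have hk2 : k ^ 2 = ω := sq_sqrt hω0.le
  set A := √(2 * ω / lam)
  have hA : lam * A ^ 2 = 2 * k ^ 2 := by
    rw [sq_sqrt (by positivity), hk2]
    field_simp
  have hc2 : (γ * k) ^ 2 = γ ^ 2 * ω := by rw [mul_pow, hk2]
  rw [← hc2, show 2 * γ * k = 2 * (γ * k) by ring] at ht₁ ht₂
  obtain ⟨ht₁0, ht₂0, hcircle, hjump⟩ := pos_and_sq_add_sq_and_add_eq (mul_pos hγ hk0)
    (by rw [hc2]; linarith [(div_lt_iff₀ hγ2).mp hω]) ht₁ ht₂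
  have hcircle' : t₂ ^ 2 + t₁ ^ 2 = 1 := by linarith
  have hu₁ : k * (0 - xbar₁) = -artanh t₁ := by
    rw [hxbar₁, artanh_eq_half_log ⟨by linarith, by nlinarith⟩]
    field_simp
    ring
  have hu₂ : k * (0 - xbar₂) = artanh t₂ := by
    rw [hxbar₂, artanh_eq_half_log ⟨by linarith, by nlinarith⟩]
    field_simp
    ring
  have hL : EqOn ψ (soliton A k xbar₁) (Iio 0) := fun x hx => by
    rw [hψ, if_pos (mem_Iio.mp hx), soliton]
  have hR : EqOn ψ (soliton (-A) k xbar₂) (Ioi 0) := fun x hx => by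
    rw [hψ, if_neg (not_lt.mpr (le_of_lt hx)), soliton, neg_mul]
  refine ⟨fun x hx => ?_, A * k * (t₁ * t₂), ?_, ?_, -(A * t₁), A * t₂, ?_, ?_, ?_⟩
  · rw [← hk2]
    rcases hx.lt_or_gt with hx | hx
    · exact soliton_ode_of_eqOn isOpen_Iio hL hA hx
    · exact soliton_ode_of_eqOn isOpen_Ioi hR (by rwa [neg_sq]) hx
  · convert tendsto_deriv_of_eqOn_soliton isOpen_Ioi hR 0 using 2
    rw [(hasDerivAt_soliton _ _ _ 0).deriv, hu₂,
      sinh_mul_sech_sq_artanh_of_sq_add_sq hcircle' ht₁0]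
    ring
  · convert tendsto_deriv_of_eqOn_soliton isOpen_Iio hL 0 using 2
    rw [(hasDerivAt_soliton _ _ _ 0).deriv, hu₁, sinh_neg, sech_neg, neg_mul (sinh _),
      sinh_mul_sech_sq_artanh_of_sq_add_sq hcircle ht₂0]
    ring
  · convert tendsto_of_eqOn_soliton hR 0 using 2
    rw [soliton, hu₂, sech_artanh_of_sq_add_sq hcircle' ht₁0, neg_mul]
  · convert tendsto_of_eqOn_soliton hL 0 using 2
    rw [soliton, hu₁, sech_neg, sech_artanh_of_sq_add_sq hcircle ht₂0]
  · linear_combination (-A) * hjump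

end
end
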